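/- Let k be an odd positive integer and let P be a homogeneous real polynomial of degree k in the four variables (ξ_1, ξ_2, η_1, η_2). If D P = 0, where D = Σ_{j=1}^{2}(ξ_j·∂/∂η_j − η_j·∂/∂ξ_j), then P = 0. In other words, the kernel of the restriction of D to homogeneous polynomials of odd degree is trivial. -/

import Mathlib

open MvPolynomial

noncomputable section

/-- the operator `D = Σ_j (ξ_j ∂/∂η_j − η_j ∂/∂ξ_j)` on real polynomials in the four
variables `ξ₁, ξ₂, η₁, η₂` (indices `0, 1, 2, 3`) -/
def Dpoly (P : MvPolynomial (Fin 4) ℝ) : MvPolynomial (Fin 4) ℝ :=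
  X 0 * pderiv 2 P + X 1 * pderiv 3 P - X 2 * pderiv 0 P - X 3 * pderiv 1 P

/-- Chain rule for evaluating a multivariate polynomial along a curve. -/
lemma hasDerivAt_eval_curve (P : MvPolynomial (Fin 4) ℝ) (c : ℝ → Fin 4 → ℝ)
    (c' : Fin 4 → ℝ) (t : ℝ) (hc : ∀ i, HasDerivAt (fun s => c s i) (c' i) t) :
    HasDerivAt (fun s => eval (c s) P)
      (∑ i, eval (c t) (pderiv i P) * c' i) t := by
  induction P using MvPolynomial.induction_on with
  | C a =>
      simpa using (hasDerivAt_const t ((algebraMap ℝ ℝ) a))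
  | add p q hp hq =>
      have := hp.fun_add hq
      simpa [mul_add, add_mul, Finset.sum_add_distrib] using this
  | mul_X p i hp =>
      have h := hp.fun_mul (hc i)
      have heq : (∑ j, eval (c t) (pderiv j (p * X i)) * c' j)
          = (∑ j, eval (c t) (pderiv j p) * c' j) * c t i + eval (c t) p * c' i := by
        have : ∀ j : Fin 4, pderiv j (p * X i)
            = pderiv j p * X i + p * (if i = j then 1 else 0) := by
          intro j
          rw [pderiv_mul, pderiv_X]
          simp [Pi.single_apply]
        simp only [this, map_add, map_mul, eval_X, add_mul, Finset.sum_add_distrib]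
        congr 1
        · rw [Finset.sum_mul]
          exact Finset.sum_congr rfl fun j _ => by ring
        · rw [Finset.sum_eq_single i]
          · simp
          · intro j _ hji
            simp [Ne.symm hji]
          · simp
      rw [heq]
      have : (fun s => eval (c s) (p * X i)) = fun s => (eval (c s) p) * c s i := by
        funext s; simp
      rw [this]
      simpa using h

lemma eval_neg_of_homogeneous {k : ℕ} {P : MvPolynomial (Fin 4) ℝ}
    (hP : P.IsHomogeneous k) (x : Fin 4 → ℝ) :
    eval (fun i => -x i) P = (-1 : ℝ) ^ k * eval x P := by
  rw [eval_eq', eval_eq', Finset.mul_sum]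
  refine Finset.sum_congr rfl fun d hd => ?_
  have hdeg : ∑ i, d i = k := by
    have := hP (mem_support_iff.mp hd)
    rw [← this]
    rw [Finsupp.weight_apply, Finsupp.sum_fintype]
    · simp
    · simp
  have : ∏ i, (-x i) ^ d i = (-1 : ℝ) ^ k * ∏ i, x i ^ d i := by
    calc ∏ i, (-x i) ^ d i = ∏ i, ((-1 : ℝ) ^ d i * x i ^ d i) := by
          exact Finset.prod_congr rfl fun i _ => by rw [neg_pow]
      _ = (∏ i, (-1 : ℝ) ^ d i) * ∏ i, x i ^ d i := by rw [Finset.prod_mul_distrib]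
      _ = (-1 : ℝ) ^ k * ∏ i, x i ^ d i := by
          rw [Finset.prod_pow_eq_pow_sum, hdeg]
  rw [this]; ring

/-- The kernel of `D` restricted to homogeneous polynomials of odd
degree is trivial. -/
theorem statement17 (k : ℕ) (hk : Odd k) (P : MvPolynomial (Fin 4) ℝ)
    (hP : P.IsHomogeneous k) (hD : Dpoly P = 0) : P = 0 := by
  -- For each point x, flow by the rotation; the value is constant, so P(-x) = P(x).
  have key : ∀ x : Fin 4 → ℝ, eval x P = 0 := by
    intro x
    set c : ℝ → Fin 4 → ℝ := fun t =>
      ![Real.cos t * x 0 - Real.sin t * x 2, Real.cos t * x 1 - Real.sin t * x 3,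
        Real.sin t * x 0 + Real.cos t * x 2, Real.sin t * x 1 + Real.cos t * x 3] with hc
    have hder : ∀ t : ℝ, HasDerivAt (fun s => eval (c s) P) 0 t := by
      intro t
      have h0 : HasDerivAt (fun s => c s 0) (-(c t 2)) t := by
        have hf : (fun s => c s 0) = fun s => Real.cos s * x 0 - Real.sin s * x 2 := by
          funext s; simp [hc]
        have hv : -(c t 2) = -Real.sin t * x 0 - Real.cos t * x 2 := by simp [hc]; ring
        rw [hf, hv]
        exact ((Real.hasDerivAt_cos t).mul_const (x 0)).sub
          ((Real.hasDerivAt_sin t).mul_const (x 2))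
      have h1 : HasDerivAt (fun s => c s 1) (-(c t 3)) t := by
        have hf : (fun s => c s 1) = fun s => Real.cos s * x 1 - Real.sin s * x 3 := by
          funext s; simp [hc]
        have hv : -(c t 3) = -Real.sin t * x 1 - Real.cos t * x 3 := by simp [hc]; ring
        rw [hf, hv]
        exact ((Real.hasDerivAt_cos t).mul_const (x 1)).sub
          ((Real.hasDerivAt_sin t).mul_const (x 3))
      have h2 : HasDerivAt (fun s => c s 2) (c t 0) t := by
        have hf : (fun s => c s 2) = fun s => Real.sin s * x 0 + Real.cos s * x 2 := by
          funext s; simp [hc]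
        have hv : c t 0 = Real.cos t * x 0 + -Real.sin t * x 2 := by simp [hc]; ring
        rw [hf, hv]
        exact ((Real.hasDerivAt_sin t).mul_const (x 0)).add
          ((Real.hasDerivAt_cos t).mul_const (x 2))
      have h3 : HasDerivAt (fun s => c s 3) (c t 1) t := by
        have hf : (fun s => c s 3) = fun s => Real.sin s * x 1 + Real.cos s * x 3 := by
          funext s; simp [hc]
        have hv : c t 1 = Real.cos t * x 1 + -Real.sin t * x 3 := by simp [hc]; ring
        rw [hf, hv]
        exact ((Real.hasDerivAt_sin t).mul_const (x 1)).add
          ((Real.hasDerivAt_cos t).mul_const (x 3))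
      have hc' : ∀ i : Fin 4, HasDerivAt (fun s => c s i)
          (![(-(c t 2)), (-(c t 3)), c t 0, c t 1] i) t := by
        intro i
        fin_cases i <;> [exact h0; exact h1; exact h2; exact h3]
      have := hasDerivAt_eval_curve P c ![(-(c t 2)), (-(c t 3)), c t 0, c t 1] t hc'
      have hsum : (∑ i, eval (c t) (pderiv i P) * ![(-(c t 2)), (-(c t 3)), c t 0, c t 1] i)
          = eval (c t) (Dpoly P) := by
        rw [Fin.sum_univ_four]
        simp only [Dpoly, map_sub, map_add, map_mul, eval_X]
        simp [Matrix.cons_val_zero, Matrix.cons_val_one]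
        ring
      rw [hsum, hD] at this
      simpa using this
    have hconst : (fun s => eval (c s) P) Real.pi = (fun s => eval (c s) P) 0 := by
      have hdiff : Differentiable ℝ (fun s => eval (c s) P) := fun t => (hder t).differentiableAt
      have hderiv0 : ∀ t, deriv (fun s => eval (c s) P) t = 0 := fun t => (hder t).deriv
      exact is_const_of_deriv_eq_zero hdiff hderiv0 Real.pi 0
    have hc0 : c 0 = x := by
      funext i; fin_cases i <;> simp [hc]
    have hcpi : c Real.pi = fun i => -x i := by
      funext i; fin_cases i <;> simp [hc]
    have : eval (fun i => -x i) P = eval x P := by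
      simpa [hc0, hcpi] using hconst
    rw [eval_neg_of_homogeneous hP x, Odd.neg_one_pow hk] at this
    linarith
  apply MvPolynomial.funext
  intro x
  simpa using key x
end
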